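/- arXiv:math/0602296 — 2 statements merged into one kernel-verified Lean document; each statement's English description precedes it below -/
import Mathlib

section
/- Let ψ_k : ℝ^d → ℝ (k = 1,…,n_g) be continuously differentiable and H a symmetric n_g × n_g real matrix. Let u : I → (ℝ^d)^{n_g}, P : I → (ℝ^d)^{n_p}, Q : I → (ℝ^d)^{n_p} be continuously differentiable on an interval I and satisfy the semi-discrete EPDiff equations: dQ_β/dt = Σ_k u_k ψ_k(Q_β), dP_β/dt = −Σ_k (P_β·u_k) ∇ψ_k(Q_β), and Σ_l H_{kl} u_l = Σ_β P_β ψ_k(Q_β) for all k. Then the energy E(t) = ½ Σ_{k,l} u_k(t)·H_{kl} u_l(t) is constant on I. -/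
/-- Gradient of a scalar function on `ℝ^d`, as the vector of partial derivatives. -/
noncomputable def grad {d : ℕ} (f : (Fin d → ℝ) → ℝ) (x : Fin d → ℝ) : Fin d → ℝ :=
  fun i => fderiv ℝ f x (Pi.single i 1)

/-- Euclidean dot product on `ℝ^d`. -/
noncomputable def dot {d : ℕ} (x y : Fin d → ℝ) : ℝ := ∑ i, x i * y i


lemma dot_comm {d : ℕ} (x y : Fin d → ℝ) : dot x y = dot y x := by
  simp [dot, mul_comm]

lemma dot_sum_right {d : ℕ} {ι : Type*} (s : Finset ι) (x : Fin d → ℝ) (f : ι → Fin d → ℝ) :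
    dot x (∑ a ∈ s, f a) = ∑ a ∈ s, dot x (f a) := by
  simp only [dot, Finset.sum_apply, Finset.mul_sum]
  exact Finset.sum_comm

lemma dot_sum_left {d : ℕ} {ι : Type*} (s : Finset ι) (x : Fin d → ℝ) (f : ι → Fin d → ℝ) :
    dot (∑ a ∈ s, f a) x = ∑ a ∈ s, dot (f a) x := by
  rw [dot_comm, dot_sum_right]; simp [dot_comm]

lemma dot_smul_right {d : ℕ} (c : ℝ) (x y : Fin d → ℝ) : dot x (c • y) = c * dot x y := by
  simp [dot, Finset.mul_sum]; ring_nf; simp [mul_comm, mul_left_comm]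

lemma dot_smul_left {d : ℕ} (c : ℝ) (x y : Fin d → ℝ) : dot (c • x) y = c * dot x y := by
  rw [dot_comm, dot_smul_right, dot_comm]

lemma dot_add_right {d : ℕ} (x y z : Fin d → ℝ) : dot x (y + z) = dot x y + dot x z := by
  simp [dot, mul_add, Finset.sum_add_distrib]

lemma dot_neg_right {d : ℕ} (x y : Fin d → ℝ) : dot x (-y) = -dot x y := by
  simp [dot, Finset.sum_neg_distrib]

lemma fderiv_apply_dot {d : ℕ} (f : (Fin d → ℝ) → ℝ) (x v : Fin d → ℝ) :
    fderiv ℝ f x v = dot v (grad f x) := by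
  have hv : v = ∑ i, v i • (Pi.single i 1 : Fin d → ℝ) := by
    funext j
    simp [Pi.single_apply, Finset.sum_apply]
  conv_lhs => rw [hv]
  rw [map_sum]
  simp [grad, dot, map_smul, smul_eq_mul]

lemma cancel {d ng np : ℕ} (u : Fin ng → Fin d → ℝ) (Pv : Fin np → Fin d → ℝ)
    (a : Fin ng → Fin np → ℝ) (g : Fin ng → Fin np → Fin d → ℝ) :
    ∑ k, dot (u k) ((∑ β, (dot (∑ j, a j β • u j) (g k β)) • Pv β) +
        ∑ β, a k β • (-∑ j, dot (Pv β) (u j) • g j β)) = 0 := by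
  have h1 : ∀ k, dot (u k) ((∑ β, (dot (∑ j, a j β • u j) (g k β)) • Pv β) +
        ∑ β, a k β • (-∑ j, dot (Pv β) (u j) • g j β))
      = (∑ β, ∑ j, a j β * dot (u j) (g k β) * dot (u k) (Pv β))
        - ∑ β, ∑ j, a k β * (dot (Pv β) (u j) * dot (u k) (g j β)) := by
    intro k
    rw [dot_add_right, dot_sum_right, dot_sum_right, sub_eq_add_neg, ← Finset.sum_neg_distrib]
    congr 1
    · refine Finset.sum_congr rfl fun β _ => ?_
      rw [dot_smul_right, dot_sum_left, Finset.sum_mul]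
      refine Finset.sum_congr rfl fun j _ => ?_
      rw [dot_smul_left]
    · refine Finset.sum_congr rfl fun β _ => ?_
      rw [dot_smul_right, dot_neg_right, dot_sum_right, mul_neg, Finset.mul_sum, neg_inj]
      refine Finset.sum_congr rfl fun j _ => ?_
      rw [dot_smul_right]
  simp only [h1, Finset.sum_sub_distrib, sub_eq_zero]
  rw [Finset.sum_comm]
  conv_rhs => rw [Finset.sum_comm]
  refine Finset.sum_congr rfl fun β _ => ?_
  rw [Finset.sum_comm]
  refine Finset.sum_congr rfl fun k _ => Finset.sum_congr rfl fun j _ => ?_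
  rw [dot_comm (Pv β) (u j)]
  ring

lemma hasDerivWithinAt_dot {d : ℕ} {f g : ℝ → Fin d → ℝ} {f' g' : Fin d → ℝ}
    {s : Set ℝ} {x : ℝ} (hf : HasDerivWithinAt f f' s x) (hg : HasDerivWithinAt g g' s x) :
    HasDerivWithinAt (fun t => dot (f t) (g t)) (dot f' (g x) + dot (f x) g') s x := by
  have h : ∀ i, HasDerivWithinAt (fun t => f t i * g t i)
      (f' i * g x i + f x i * g' i) s x := fun i =>
    ((hasDerivWithinAt_pi.mp hf) i).mul ((hasDerivWithinAt_pi.mp hg) i)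
  have := HasDerivWithinAt.fun_sum (u := Finset.univ) (fun i _ => h i)
  simpa [dot, Finset.sum_add_distrib] using this

/-- Along C¹ solutions of the semi-discrete EPDiff equations
`Q̇_β = Σ_k u_k ψ_k(Q_β)`, `Ṗ_β = −Σ_k (P_β·u_k) ∇ψ_k(Q_β)`,
`Σ_l H_{kl} u_l = Σ_β P_β ψ_k(Q_β)` on an interval `I`, the energy
`E(t) = ½ Σ_{k,l} u_k(t)·H_{kl} u_l(t)` is constant on `I`. -/
theorem stmt4 (d ng np : ℕ)
    (ψ : Fin ng → (Fin d → ℝ) → ℝ) (hψ : ∀ k, ContDiff ℝ 1 (ψ k))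
    (H : Matrix (Fin ng) (Fin ng) ℝ) (hH : H.IsSymm)
    (I : Set ℝ) (hI : Convex ℝ I)
    (u : ℝ → Fin ng → Fin d → ℝ) (P Q : ℝ → Fin np → Fin d → ℝ)
    (hu : ContDiffOn ℝ 1 u I) (hP : ContDiffOn ℝ 1 P I) (hQ : ContDiffOn ℝ 1 Q I)
    (hQeq : ∀ t ∈ I, ∀ β, HasDerivWithinAt (fun s => Q s β)
      (∑ k, ψ k (Q t β) • u t k) I t)
    (hPeq : ∀ t ∈ I, ∀ β, HasDerivWithinAt (fun s => P s β)
      (-∑ k, dot (P t β) (u t k) • grad (ψ k) (Q t β)) I t)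
    (hmom : ∀ t ∈ I, ∀ k, ∑ l, H k l • u t l = ∑ β, ψ k (Q t β) • P t β) :
    ∀ s ∈ I, ∀ t ∈ I,
      (1/2) * ∑ k, ∑ l, H k l * dot (u s k) (u s l)
        = (1/2) * ∑ k, ∑ l, H k l * dot (u t k) (u t l) := by
  set E : ℝ → ℝ := fun τ => (1/2) * ∑ k, ∑ l, H k l * dot (u τ k) (u τ l) with hEdef
  suffices key : ∀ τ ∈ I, HasDerivWithinAt E 0 I τ by
    intro s hs t ht
    have h0 : ((1 : ℝ →L[ℝ] ℝ).smulRight (0:ℝ)) = 0 := by ext; simp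
    have hbound := Convex.norm_image_sub_le_of_norm_hasFDerivWithin_le
      (f := E) (f' := fun _ : ℝ => (0 : ℝ →L[ℝ] ℝ)) (C := 0)
      (fun x hx => h0 ▸ (key x hx).hasFDerivWithinAt)
      (fun x hx => by simp) hI hs ht
    have : E t = E s := by
      have := hbound
      rw [zero_mul] at this
      have h := norm_le_zero_iff.mp this
      linarith [sub_eq_zero.mp h]
    exact this.symm
  intro τ hτ
  -- the derivative of the components of u
  set u' : Fin ng → Fin d → ℝ := fun k => derivWithin (fun s => u s k) I τ with hu'def
  have hud : ∀ k, HasDerivWithinAt (fun s => u s k) (u' k) I τ := by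
    intro k
    have hd : DifferentiableWithinAt ℝ u I τ := (hu.differentiableOn one_ne_zero) τ hτ
    exact ((differentiableWithinAt_pi.mp hd) k).hasDerivWithinAt
  -- derivative of s ↦ ψ k (Q s β)
  have hψc : ∀ k β, HasDerivWithinAt (fun s => ψ k (Q s β))
      (dot (∑ j, ψ j (Q τ β) • u τ j) (grad (ψ k) (Q τ β))) I τ := by
    intro k β
    have hf : HasFDerivAt (ψ k) (fderiv ℝ (ψ k) (Q τ β)) (Q τ β) :=
      (((hψ k).differentiable one_ne_zero) (Q τ β)).hasFDerivAt
    have hcomp := hf.comp_hasDerivWithinAt τ (hQeq τ hτ β)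
    rw [fderiv_apply_dot] at hcomp
    exact hcomp
  -- derivative of the inner momentum sum
  have hinner : ∀ k, HasDerivWithinAt (fun s => ∑ β, ψ k (Q s β) • P s β)
      (∑ β, (ψ k (Q τ β) • (-∑ j, dot (P τ β) (u τ j) • grad (ψ j) (Q τ β))
        + (dot (∑ j, ψ j (Q τ β) • u τ j) (grad (ψ k) (Q τ β))) • P τ β)) I τ := by
    intro k
    exact HasDerivWithinAt.fun_sum (fun β _ => (hψc k β).smul (hPeq τ hτ β))
  -- derivative of W
  set W : ℝ → ℝ := fun s => ∑ k, dot (u s k) (∑ β, ψ k (Q s β) • P s β) with hWdef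
  set wv : ℝ := ∑ k, (dot (u' k) (∑ β, ψ k (Q τ β) • P τ β)
    + dot (u τ k) (∑ β, (ψ k (Q τ β) • (-∑ j, dot (P τ β) (u τ j) • grad (ψ j) (Q τ β))
        + (dot (∑ j, ψ j (Q τ β) • u τ j) (grad (ψ k) (Q τ β))) • P τ β))) with hwvdef
  have hW : HasDerivWithinAt W wv I τ :=
    HasDerivWithinAt.fun_sum (fun k _ => hasDerivWithinAt_dot (hud k) (hinner k))
  -- E = (1/2) * W on I
  have hWE : ∀ s ∈ I, E s = (1/2) * W s := by
    intro s hs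
    rw [hEdef, hWdef]
    simp only
    congr 1
    refine Finset.sum_congr rfl fun k _ => ?_
    rw [← hmom s hs k, dot_sum_right]
    refine Finset.sum_congr rfl fun l _ => ?_
    rw [dot_smul_right]
  set B : ℝ := ∑ k, ∑ l, H k l * dot (u' k) (u τ l) with hBdef
  -- wv = B
  have hwvB : wv = B := by
    rw [hwvdef, hBdef]
    have hzero : ∑ k, dot (u τ k)
        (∑ β, (ψ k (Q τ β) • (-∑ j, dot (P τ β) (u τ j) • grad (ψ j) (Q τ β))
          + (dot (∑ j, ψ j (Q τ β) • u τ j) (grad (ψ k) (Q τ β))) • P τ β)) = 0 := by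
      have hc := cancel (u τ) (P τ) (fun j β => ψ j (Q τ β)) (fun j β => grad (ψ j) (Q τ β))
      rw [← hc]
      refine Finset.sum_congr rfl fun k _ => ?_
      congr 1
      rw [Finset.sum_add_distrib]
      exact add_comm _ _
    rw [Finset.sum_add_distrib, hzero, add_zero]
    refine Finset.sum_congr rfl fun k _ => ?_
    rw [← hmom τ hτ k, dot_sum_right]
    refine Finset.sum_congr rfl fun l _ => ?_
    rw [dot_smul_right]
  -- E has derivative (1/2) * B via W
  have h2 : HasDerivWithinAt E ((1/2) * B) I τ := by
    have := (hW.const_mul (1/2 : ℝ)).congr hWE (hWE τ hτ)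
    rwa [hwvB] at this
  -- E has derivative B directly
  have h1 : HasDerivWithinAt E B I τ := by
    have hterm : ∀ k l, HasDerivWithinAt (fun s => H k l * dot (u s k) (u s l))
        (H k l * (dot (u' k) (u τ l) + dot (u τ k) (u' l))) I τ :=
      fun k l => (hasDerivWithinAt_dot (hud k) (hud l)).const_mul (H k l)
    have hsum : HasDerivWithinAt (fun s => ∑ k, ∑ l, H k l * dot (u s k) (u s l))
        (∑ k, ∑ l, H k l * (dot (u' k) (u τ l) + dot (u τ k) (u' l))) I τ :=
      HasDerivWithinAt.fun_sum (fun k _ => HasDerivWithinAt.fun_sum (fun l _ => hterm k l))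
    have hE' : HasDerivWithinAt E
        ((1/2) * ∑ k, ∑ l, H k l * (dot (u' k) (u τ l) + dot (u τ k) (u' l))) I τ :=
      hsum.const_mul (1/2 : ℝ)
    have hval : (1/2) * (∑ k, ∑ l, H k l * (dot (u' k) (u τ l) + dot (u τ k) (u' l))) = B := by
      have hsplit : ∑ k, ∑ l, H k l * (dot (u' k) (u τ l) + dot (u τ k) (u' l))
          = B + ∑ k, ∑ l, H k l * dot (u τ k) (u' l) := by
        rw [hBdef, ← Finset.sum_add_distrib]
        refine Finset.sum_congr rfl fun k _ => ?_
        rw [← Finset.sum_add_distrib]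
        refine Finset.sum_congr rfl fun l _ => ?_
        ring
      have hsym : ∑ k, ∑ l, H k l * dot (u τ k) (u' l) = B := by
        rw [hBdef, Finset.sum_comm]
        refine Finset.sum_congr rfl fun k _ => Finset.sum_congr rfl fun l _ => ?_
        rw [Matrix.IsSymm.apply hH l k, dot_comm]
      rw [hsplit, hsym]
      ring
    rwa [hval] at hE'
  -- combine to get derivative 0
  have hz : HasDerivWithinAt (fun _ : ℝ => (0:ℝ)) ((1/2) * B) I τ := by
    have hz0 := h1.sub h2
    have harith : B - (1/2) * B = (1/2) * B := by ring
    rw [harith] at hz0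
    rw [show (fun _ : ℝ => (0:ℝ)) = E - E from by funext x; simp]
    exact hz0
  have hfin := h2.sub hz
  rw [show E - (fun _ : ℝ => (0:ℝ)) = E from by funext x; simp] at hfin
  simpa using hfin
end

section
/- Let ψ_k : ℝ^d → ℝ (k = 1,…,n_g) be continuously differentiable. Let Q, P : I → (ℝ^d)^{n_p} be continuously differentiable on an interval I, let J_β : I → ℝ^{d×d} be continuous, and fix vectors ξ_β ∈ ℝ^d (β = 1,…,n_p). Suppose for each t there is an n_g × n_p real matrix B(t) satisfying the left-inverse property Σ_β B_{lβ}(t) ψ_k(Q_β(t)) = δ_{lk} for all k, l, and that the curves satisfy dQ_β/dt = J_β ξ_β and dP_{β,i}/dt = −Σ_k B_{kβ}(t) Σ_{β'} P_{β',i} ( ∇ψ_k(Q_{β'}) · J_{β'} ξ_{β'} ) for all β and components i = 1,…,d. Then for every k the grid momentum component Σ_β P_β(t) ψ_k(Q_β(t)) is constant in t. In particular, any Hamiltonian that is a function of the grid momentum alone — such as ℋ = ½ Σ_{k,l,i,j} M_{ik} m_k·(H^{-1})_{kl} M_{lj} m_j — is invariant under this flow. -/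
lemma clm_apply_eq_sum {d : ℕ} (L : (Fin d → ℝ) →L[ℝ] ℝ) (v : Fin d → ℝ) :
    L v = ∑ i, L (Pi.single i 1) * v i := by
  conv_lhs => rw [← Finset.univ_sum_single v]
  rw [map_sum]
  refine Finset.sum_congr rfl fun i _ => ?_
  have h : (Pi.single i (v i) : Fin d → ℝ) = v i • (Pi.single i 1 : Fin d → ℝ) := by
    rw [← Pi.single_smul, smul_eq_mul, mul_one]
  rw [h, map_smul, smul_eq_mul, mul_comm]

lemma fderiv_eq_dot_grad {d : ℕ} (f : (Fin d → ℝ) → ℝ) (x v : Fin d → ℝ) :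
    fderiv ℝ f x v = dot (grad f x) v := by
  rw [clm_apply_eq_sum (fderiv ℝ f x) v]
  rfl

/-- Along the flow of the relabelling Hamiltonian
`h = Σ_β P_β·J_β ξ_β` (with `B(t)` a left inverse of the interpolation matrix
`ψ_k(Q_β)`), i.e. `Q̇_β = J_β ξ_β` and
`Ṗ_{β,i} = −Σ_k B_{kβ} Σ_{β'} P_{β',i} (∇ψ_k(Q_{β'})·J_{β'} ξ_{β'})`,
each grid-momentum component `Σ_β P_β ψ_k(Q_β)` is constant in `t`; in particular any
function of the grid momentum alone (such as the VPM Hamiltonian `ℋ`) is invariant. -/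
theorem stmt12 (d ng np : ℕ)
    (ψ : Fin ng → (Fin d → ℝ) → ℝ) (hψ : ∀ k, ContDiff ℝ 1 (ψ k))
    (I : Set ℝ) (hI : Convex ℝ I)
    (Q P : ℝ → Fin np → Fin d → ℝ)
    (hQ : ContDiffOn ℝ 1 Q I) (hP : ContDiffOn ℝ 1 P I)
    (J : ℝ → Fin np → Matrix (Fin d) (Fin d) ℝ)
    (hJcont : ∀ β i j, ContinuousOn (fun t => J t β i j) I)
    (ξ : Fin np → Fin d → ℝ)
    (B : ℝ → Matrix (Fin ng) (Fin np) ℝ)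
    (hB : ∀ t ∈ I, ∀ l k, ∑ β, B t l β * ψ k (Q t β) = if l = k then (1:ℝ) else 0)
    (hQeq : ∀ t ∈ I, ∀ β, HasDerivAt (fun s => Q s β) ((J t β).mulVec (ξ β)) t)
    (hPeq : ∀ t ∈ I, ∀ β i, HasDerivAt (fun s => P s β i)
      (-∑ k, B t k β * ∑ β', P t β' i *
        dot (grad (ψ k) (Q t β')) ((J t β').mulVec (ξ β'))) t) :
    (∀ k, ∀ s ∈ I, ∀ t ∈ I,
      ∑ β, ψ k (Q s β) • P s β = ∑ β, ψ k (Q t β) • P t β)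
    ∧ (∀ F : (Fin ng → Fin d → ℝ) → ℝ, ∀ s ∈ I, ∀ t ∈ I,
      F (fun k => ∑ β, ψ k (Q s β) • P s β)
        = F (fun k => ∑ β, ψ k (Q t β) • P t β)) := by
  set A : ℝ → Fin ng → Fin np → ℝ :=
    fun t k β => dot (grad (ψ k) (Q t β)) ((J t β).mulVec (ξ β)) with hA
  have key : ∀ k i, ∀ s ∈ I, ∀ t ∈ I,
      ∑ β, ψ k (Q s β) * P s β i = ∑ β, ψ k (Q t β) * P t β i := by
    intro k i s hs t ht
    have hderiv : ∀ u ∈ I,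
        HasDerivAt (fun r => ∑ β, ψ k (Q r β) * P r β i) 0 u := by
      intro u hu
      have hsum : HasDerivAt (fun r => ∑ β, ψ k (Q r β) * P r β i)
          (∑ β, (A u k β * P u β i +
            ψ k (Q u β) * (-∑ l, B u l β * ∑ β', P u β' i * A u l β'))) u := by
        refine HasDerivAt.fun_sum fun β _ => ?_
        have hψd : HasFDerivAt (ψ k) (fderiv ℝ (ψ k) (Q u β)) (Q u β) :=
          (((hψ k).differentiable one_ne_zero) (Q u β)).hasFDerivAt
        have hc : HasDerivAt (fun r => ψ k (Q r β))
            (fderiv ℝ (ψ k) (Q u β) ((J u β).mulVec (ξ β))) u :=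
          hψd.comp_hasDerivAt u (hQeq u hu β)
        have hc' : HasDerivAt (fun r => ψ k (Q r β)) (A u k β) u := by
          rwa [fderiv_eq_dot_grad] at hc
        exact hc'.mul (hPeq u hu β i)
      have hzero : (∑ β, (A u k β * P u β i +
            ψ k (Q u β) * (-∑ l, B u l β * ∑ β', P u β' i * A u l β'))) = 0 := by
        set S : Fin ng → ℝ := fun l => ∑ β', P u β' i * A u l β' with hS
        rw [Finset.sum_add_distrib]
        have e1 : (∑ β, ψ k (Q u β) * (-∑ l, B u l β * S l))
            = -∑ l, (∑ β, B u l β * ψ k (Q u β)) * S l := by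
          calc ∑ β, ψ k (Q u β) * (-∑ l, B u l β * S l)
              = ∑ β, ∑ l, -(B u l β * ψ k (Q u β) * S l) := by
                refine Finset.sum_congr rfl fun β _ => ?_
                rw [mul_neg, Finset.mul_sum, ← Finset.sum_neg_distrib]
                exact Finset.sum_congr rfl fun l _ => by ring
            _ = ∑ l, ∑ β, -(B u l β * ψ k (Q u β) * S l) := Finset.sum_comm
            _ = -∑ l, (∑ β, B u l β * ψ k (Q u β)) * S l := by
                rw [← Finset.sum_neg_distrib]
                refine Finset.sum_congr rfl fun l _ => ?_
                rw [Finset.sum_mul, ← Finset.sum_neg_distrib]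
        have e1b : (∑ l, (∑ β, B u l β * ψ k (Q u β)) * S l)
            = ∑ l, (if l = k then (1:ℝ) else 0) * S l :=
          Finset.sum_congr rfl fun l _ => by rw [hB u hu l k]
        rw [e1, e1b]
        have e2 : (∑ l, (if l = k then (1:ℝ) else 0) * S l) = S k := by
          simp [ite_mul]
        rw [e2]
        have e3 : (∑ β, A u k β * P u β i) = S k := by
          rw [hS]; exact Finset.sum_congr rfl fun β _ => by ring
        rw [e3]; ring
      rwa [hzero] at hsum
    have hle := hI.norm_image_sub_le_of_norm_hasDerivWithin_le
      (C := 0) (f' := fun _ => (0:ℝ)) (fun u hu => (hderiv u hu).hasDerivWithinAt)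
      (fun u hu => by simp) hs ht
    have h0 : ‖(∑ β, ψ k (Q t β) * P t β i) - ∑ β, ψ k (Q s β) * P s β i‖ = 0 :=
      le_antisymm (by simpa using hle) (norm_nonneg _)
    rw [norm_eq_zero, sub_eq_zero] at h0
    exact h0.symm
  have main : ∀ k, ∀ s ∈ I, ∀ t ∈ I,
      ∑ β, ψ k (Q s β) • P s β = ∑ β, ψ k (Q t β) • P t β := by
    intro k s hs t ht
    funext i
    have := key k i s hs t ht
    simpa [Finset.sum_apply, Pi.smul_apply, smul_eq_mul] using this
  refine ⟨main, fun F s hs t ht => ?_⟩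
  congr 1
  funext k
  exact main k s hs t ht
end
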